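/- Let m ∈ ℕ (m ≥ 1), [a,b] ⊂ ℝ, and n ∈ ℕ with ⌈na⌉ ≤ ⌊nb⌋. Then for every x ∈ [a,b], 1/(∑_{k=⌈na⌉}^{⌊nb⌋} Φ(nx − k)) < 2(1 + 4^m)^{1/(2m)}. -/
import Mathlib

open scoped BigOperators
open Real Filter

/-- The algebraic sigmoid function `φ(x) = x / (1 + x^(2m))^(1/(2m))`. -/
noncomputable def phi (m : ℕ) (x : ℝ) : ℝ :=
  x / (1 + x ^ (2 * m)) ^ ((1 : ℝ) / (2 * m))

/-- The activation function `Φ(x) = (φ(x+1) - φ(x-1))/4`. -/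
noncomputable def Phi (m : ℕ) (x : ℝ) : ℝ :=
  (phi m (x + 1) - phi m (x - 1)) / 4

lemma pow2m_nonneg (m : ℕ) (x : ℝ) : 0 ≤ x ^ (2 * m) := (even_two_mul m).pow_nonneg x

lemma one_add_pow_pos (m : ℕ) (x : ℝ) : 0 < 1 + x ^ (2 * m) := by
  have := pow2m_nonneg m x; linarith

lemma D_pos (m : ℕ) (x : ℝ) : 0 < (1 + x ^ (2 * m)) ^ ((1 : ℝ) / (2 * m)) :=
  Real.rpow_pos_of_pos (one_add_pow_pos m x) _

lemma D_pow (m : ℕ) (hm : 1 ≤ m) (x : ℝ) :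
    ((1 + x ^ (2 * m)) ^ ((1 : ℝ) / (2 * m))) ^ (2 * m) = 1 + x ^ (2 * m) := by
  have h0 : (0:ℝ) ≤ 1 + x ^ (2 * m) := (one_add_pow_pos m x).le
  have hm' : ((2 * m : ℕ) : ℝ) ≠ 0 := by positivity
  rw [← Real.rpow_natCast ((1 + x ^ (2*m)) ^ ((1:ℝ)/(2*m))) (2*m), ← Real.rpow_mul h0]
  rw [show (1:ℝ)/(2*m) * ((2*m : ℕ) : ℝ) = 1 by push_cast; field_simp]
  exact Real.rpow_one _

lemma phi_neg (m : ℕ) (x : ℝ) : phi m (-x) = - phi m x := by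
  unfold phi
  rw [(even_two_mul m).neg_pow x, neg_div]

lemma phi_nonneg (m : ℕ) {x : ℝ} (hx : 0 ≤ x) : 0 ≤ phi m x :=
  div_nonneg hx (D_pos m x).le

lemma phi_mono (m : ℕ) (hm : 1 ≤ m) : Monotone (phi m) := by
  have key : ∀ x y : ℝ, 0 ≤ x → x ≤ y → phi m x ≤ phi m y := by
    intro x y hx hxy
    have hy : 0 ≤ y := hx.trans hxy
    have h2m : 2 * m ≠ 0 := by omega
    have hpow : (phi m x) ^ (2 * m) ≤ (phi m y) ^ (2 * m) := by
      unfold phi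
      rw [div_pow, div_pow, D_pow m hm, D_pow m hm]
      rw [div_le_div_iff₀ (one_add_pow_pos m x) (one_add_pow_pos m y)]
      have hxy2m : x ^ (2*m) ≤ y ^ (2*m) := pow_le_pow_left₀ hx hxy _
      nlinarith [pow2m_nonneg m x, pow2m_nonneg m y]
    exact (pow_le_pow_iff_left₀ (phi_nonneg m hx) (phi_nonneg m hy) h2m).mp hpow
  intro x y hxy
  rcases le_total 0 x with hx | hx
  · exact key x y hx hxy
  · rcases le_total 0 y with hy | hy
    · calc phi m x ≤ 0 := by
            have : 0 ≤ phi m (-x) := phi_nonneg m (by linarith)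
            rw [phi_neg] at this; linarith
        _ ≤ phi m y := phi_nonneg m hy
    · have := key (-y) (-x) (by linarith) (by linarith)
      rw [phi_neg, phi_neg] at this; linarith

lemma Phi_nonneg (m : ℕ) (hm : 1 ≤ m) (s : ℝ) : 0 ≤ Phi m s := by
  unfold Phi
  have := phi_mono m hm (show s - 1 ≤ s + 1 by linarith)
  linarith

lemma phi_gt (m : ℕ) (hm : 1 ≤ m) {u : ℝ} (h0 : 0 < u) (h2 : u < 2) :
    u / (1 + (2:ℝ) ^ (2 * m)) ^ ((1:ℝ) / (2 * m)) < phi m u := by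
  unfold phi
  have h2m : 2 * m ≠ 0 := by omega
  have hlt : u ^ (2*m) < (2:ℝ) ^ (2*m) := pow_lt_pow_left₀ h2 h0.le h2m
  have hD : (1 + u ^ (2*m)) ^ ((1:ℝ)/(2*m)) < (1 + (2:ℝ) ^ (2*m)) ^ ((1:ℝ)/(2*m)) := by
    apply Real.rpow_lt_rpow (one_add_pow_pos m u).le (by linarith)
    positivity
  exact div_lt_div_of_pos_left h0 (D_pos m u) hD

lemma Phi_gt (m : ℕ) (hm : 1 ≤ m) {t : ℝ} (h1 : -1 < t) (h2 : t < 1) :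
    1 / (2 * (1 + (2:ℝ) ^ (2 * m)) ^ ((1:ℝ) / (2 * m))) < Phi m t := by
  set R := (1 + (2:ℝ) ^ (2 * m)) ^ ((1:ℝ) / (2 * m)) with hR
  have hRpos : 0 < R := Real.rpow_pos_of_pos (one_add_pow_pos m 2) _
  have hu : (t + 1) / R < phi m (t + 1) := phi_gt m hm (by linarith) (by linarith)
  have hv : (1 - t) / R < phi m (1 - t) := phi_gt m hm (by linarith) (by linarith)
  have hodd : phi m (t - 1) = - phi m (1 - t) := by
    rw [show t - 1 = -(1 - t) by ring, phi_neg]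
  unfold Phi
  rw [hodd]
  have : (t+1)/R + (1-t)/R = 2/R := by field_simp; ring
  have h14 : 1 / (2 * R) = (2 / R) / 4 := by field_simp; ring
  rw [h14]
  linarith

theorem Phi_sum_lower_bound (m : ℕ) (hm : 1 ≤ m) (a b : ℝ) (hab : a ≤ b) (n : ℕ)
    (hnab : ⌈(n : ℝ) * a⌉ ≤ ⌊(n : ℝ) * b⌋) (x : ℝ) (hx : x ∈ Set.Icc a b) :
    1 / (∑ k ∈ Finset.Icc ⌈(n : ℝ) * a⌉ ⌊(n : ℝ) * b⌋, Phi m ((n : ℝ) * x - (k : ℝ))) <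
      2 * ((1 : ℝ) + 4 ^ m) ^ ((1 : ℝ) / (2 * m)) := by
  obtain ⟨hax, hxb⟩ := hx
  set y : ℝ := (n : ℝ) * x with hy
  have hya : (n : ℝ) * a ≤ y := by
    apply mul_le_mul_of_nonneg_left hax (by positivity)
  have hyb : y ≤ (n : ℝ) * b := by
    apply mul_le_mul_of_nonneg_left hxb (by positivity)
  set A := ⌈(n : ℝ) * a⌉ with hA
  set B := ⌊(n : ℝ) * b⌋ with hB
  set k₀ : ℤ := max A ⌊y⌋ with hk₀
  have hk₀mem : k₀ ∈ Finset.Icc A B := by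
    rw [Finset.mem_Icc]
    constructor
    · exact le_max_left _ _
    · exact max_le hnab (Int.floor_le_floor hyb)
  have ht2 : y - (k₀ : ℝ) < 1 := by
    have h1 : (⌊y⌋ : ℝ) ≤ (k₀ : ℝ) := by exact_mod_cast Int.cast_le.mpr (le_max_right _ _)
    have := Int.lt_floor_add_one y
    linarith
  have ht1 : -1 < y - (k₀ : ℝ) := by
    rcases le_or_gt A ⌊y⌋ with h | h
    · have : k₀ = ⌊y⌋ := max_eq_right h
      rw [this]
      have := Int.floor_le y
      linarith
    · have hkA : k₀ = A := max_eq_left h.le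
      rw [hkA]
      have hAc : A ≤ ⌈y⌉ := Int.ceil_le_ceil hya
      have : (A : ℝ) ≤ (⌈y⌉ : ℝ) := by exact_mod_cast hAc
      have := Int.ceil_lt_add_one y
      linarith
  -- rewrite 4^m as 2^(2*m)
  have h4 : ((4:ℝ)) ^ m = (2:ℝ) ^ (2 * m) := by rw [pow_mul]; norm_num
  rw [h4]
  set R := (1 + (2:ℝ) ^ (2 * m)) ^ ((1:ℝ) / (2 * m)) with hR
  have hRpos : 0 < R := Real.rpow_pos_of_pos (one_add_pow_pos m 2) _
  have hkey : 1 / (2 * R) < Phi m (y - (k₀ : ℝ)) := Phi_gt m hm ht1 ht2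
  have hsum : Phi m (y - (k₀ : ℝ)) ≤ ∑ k ∈ Finset.Icc A B, Phi m (y - (k : ℝ)) :=
    Finset.single_le_sum (f := fun k : ℤ => Phi m (y - (k : ℝ))) (fun i _ => Phi_nonneg m hm _) hk₀mem
  have hc : 0 < 1 / (2 * R) := by positivity
  have hS : 1 / (2 * R) < ∑ k ∈ Finset.Icc A B, Phi m (y - (k : ℝ)) := lt_of_lt_of_le hkey hsum
  have := one_div_lt_one_div_of_lt hc hS
  rwa [one_div_one_div] at this
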